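/- Let S be a finite set with |S| = n ≥ 3 and let P_n be the stochastic matrix on S with all entries equal to 1/n. Then n − 1 ∉ K(P_n); that is, there is no probability measure μ consistent with P_n whose coalescence number satisfies k(μ) = n − 1. -/

import Mathlib

open MeasureTheory

namespace CFTP

variable {S : Type*}

/-- Forward composition `f_t ∘ f_{t-1} ∘ ⋯ ∘ f_1` (functions are indexed by 1,2,…). -/
def fwd (f : ℕ → S → S) : ℕ → S → S
  | 0 => id
  | t + 1 => f (t + 1) ∘ fwd f t

/-- Backward composition `f_1 ∘ f_2 ∘ ⋯ ∘ f_t`. -/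
def bwd (f : ℕ → S → S) : ℕ → S → S
  | 0 => id
  | t + 1 => bwd f t ∘ f (t + 1)

/-- `k_t(f⃗)`: the number of equivalence classes of `i ~ j ↔ f⃗_t i = f⃗_t j`,
i.e. the cardinality of the image of the forward composition. -/
noncomputable def ktF (f : ℕ → S → S) (t : ℕ) : ℕ := Set.ncard (Set.range (fwd f t))

/-- `k_t(f⃖)`: the cardinality of the image of the backward composition. -/
noncomputable def ktB (f : ℕ → S → S) (t : ℕ) : ℕ := Set.ncard (Set.range (bwd f t))

/-- `k(f⃗)`: the eventual (= minimal) value of the non-increasing sequence `k_t(f⃗)`. -/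
noncomputable def kF (f : ℕ → S → S) : ℕ := ⨅ t, ktF f t

/-- `k(f⃖)`. -/
noncomputable def kB (f : ℕ → S → S) : ℕ := ⨅ t, ktB f t

/-- `μbar` is the joint law of an i.i.d. sequence with one-step law `ν`,
i.e. the countable product measure `∏_{s ∈ ℕ} ν`, characterised by its
values on cylinder events. -/
def IsIID [MeasurableSpace S] (ν : Measure (S → S)) (μbar : Measure (ℕ → S → S)) : Prop :=
  ∀ (I : Finset ℕ) (g : ℕ → S → S),
    μbar {F | ∀ s ∈ I, F s = g s} = ∏ s ∈ I, ν {g s}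

/-- The support of a probability measure on the finite set `F_S`. -/
def supp [MeasurableSpace S] (ν : Measure (S → S)) : Set (S → S) := {f | 0 < ν {f}}

/-- A stochastic matrix: nonnegative entries, row sums one. -/
def IsStochastic [Fintype S] (P : S → S → ℝ) : Prop :=
  (∀ i j, 0 ≤ P i j) ∧ ∀ i, ∑ j, P i j = 1

/-- `ν ∈ L(P)`: the measure `ν` on `F_S` is consistent with the matrix `P`. -/
def Consistent [Fintype S] [MeasurableSpace S] (P : S → S → ℝ) (ν : Measure (S → S)) : Prop :=
  ∀ i j, ν {f : S → S | f i = j} = ENNReal.ofReal (P i j)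

/-- Irreducibility: for all `i j` some power of `P` has positive `(i,j)` entry. -/
def Irred [Fintype S] [DecidableEq S] (P : S → S → ℝ) : Prop :=
  ∀ i j, ∃ t, 1 ≤ t ∧ 0 < ((Matrix.of P) ^ t) i j

/-- Aperiodicity: for each `i`, the gcd of `{t ≥ 1 : (P^t)_{i,i} > 0}` is `1`,
expressed as: every common divisor of that set equals `1`. -/
def Aperiodic [Fintype S] [DecidableEq S] (P : S → S → ℝ) : Prop :=
  ∀ i, ∀ d : ℕ, (∀ t, 1 ≤ t → 0 < ((Matrix.of P) ^ t) i i → d ∣ t) → d = 1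

/-- A function is constant. -/
def IsConst (g : S → S) : Prop := ∀ i j, g i = g j

/-- The backward coalescence time `C`. -/
noncomputable def Ctime (F : ℕ → S → S) : ℕ∞ :=
  sInf ((fun t : ℕ => (t : ℕ∞)) '' {t : ℕ | 1 ≤ t ∧ IsConst (bwd F t)})

/-- The forward coalescence time `T`. -/
noncomputable def Ttime (F : ℕ → S → S) : ℕ∞ :=
  sInf ((fun t : ℕ => (t : ℕ∞)) '' {t : ℕ | 1 ≤ t ∧ IsConst (fwd F t)})

/-- The 0-1 matrix `M_f`. -/
noncomputable def Mmat [Fintype S] [DecidableEq S] (f : S → S) : Matrix S S ℝ :=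
  Matrix.of fun i j => if f i = j then 1 else 0

/-- The product `M_{f_t} M_{f_{t-1}} ⋯ M_{f_1}`. -/
noncomputable def Mprod [Fintype S] [DecidableEq S] (f : ℕ → S → S) : ℕ → Matrix S S ℝ
  | 0 => 1
  | t + 1 => Mmat (f (t + 1)) * Mprod f t

/-- The event that states `i` and `j` coalesce. -/
def coalEvent (i j : S) : Set (ℕ → S → S) := {F | ∃ t, 1 ≤ t ∧ fwd F t i = fwd F t j}


/-! Almost surely `k(F) = n - 1`, and every finite word of maps from the support of `μ` is the
prefix of some typical sequence; so every composition `w` of support maps has image of size at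
least `n - 1`, and some support map is not injective. A non-injective such `w` misses exactly one
point `m`, and a support map `g` can only identify a pair containing `m`, for otherwise `g ∘ w`
would have an image of size `n - 2`.

Consistency with `P_n` says that every `j` has on average exactly one preimage. If all
non-injective support maps miss the same point `m₀`, then `m₀` has on average fewer than one.
Otherwise two of them miss points `m₀ ≠ m₁`, so every non-injective support map identifies `m₀`
and `m₁` and misses one of them. A support map `h` with `h m₀ = j₀ ∉ {m₀, m₁}` cannot be injective
(`h ∘ f₀` would miss `j₀`), so `j₀` has two preimages under `h` and at least one under every other
support map: on average more than one. -/

open Function Set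
open scoped Finset

section Composition

theorem fwd_congr {F G : ℕ → S → S} {t : ℕ} (h : ∀ s ∈ Finset.Icc 1 t, F s = G s) :
    fwd F t = fwd G t := by
  induction t with
  | zero => rfl
  | succ t ih =>
    rw [fwd, fwd, h (t + 1) (by simp),
      ih fun s hs => h s (Finset.Icc_subset_Icc_right t.le_succ hs)]

theorem injective_fwd {F : ℕ → S → S} {t : ℕ} (h : ∀ s ∈ Finset.Icc 1 t, (F s).Injective) :
    (fwd F t).Injective := by
  induction t with
  | zero => exact injective_id
  | succ t ih =>
    exact (h (t + 1) (by simp)).comp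
      (ih fun s hs => h s (Finset.Icc_subset_Icc_right t.le_succ hs))

theorem kF_le_ktF (F : ℕ → S → S) (t : ℕ) : kF F ≤ ktF F t :=
  ciInf_le (OrderBot.bddBelow _) t

theorem exists_ktF_eq_kF (F : ℕ → S → S) : ∃ t, ktF F t = kF F :=
  ciInf_mem _

variable [Finite S] [MeasurableSpace S] [DiscreteMeasurableSpace S]

theorem measurable_fwd (t : ℕ) : Measurable fun F : ℕ → S → S => fwd F t := by
  induction t with
  | zero => exact measurable_const
  | succ t ih =>
    exact (measurable_of_countable fun p : (S → S) × (S → S) => p.1 ∘ p.2).comp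
      ((measurable_pi_apply (t + 1)).prodMk ih)

theorem measurable_kF : Measurable (kF : (ℕ → S → S) → ℕ) :=
  Measurable.iInf fun t => (measurable_of_countable fun g : S → S => (range g).ncard).comp
    (measurable_fwd t)

end Composition

section IID

variable [MeasurableSpace S] {ν : Measure (S → S)} {μbar : Measure (ℕ → S → S)}

theorem measure_cylinder_pos (hiid : IsIID ν μbar) {I : Finset ℕ} {g : ℕ → S → S}
    (hg : ∀ s ∈ I, g s ∈ supp ν) : 0 < μbar {F | ∀ s ∈ I, F s = g s} := by
  rw [hiid]
  exact CanonicallyOrderedAdd.prod_pos.mpr hg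

def suppWords (ν : Measure (S → S)) : Set (S → S) :=
  {w | ∃ t g, (∀ s ∈ Finset.Icc 1 t, g s ∈ supp ν) ∧ fwd g t = w}

theorem comp_mem_suppWords {f w : S → S} (hf : f ∈ supp ν) (hw : w ∈ suppWords ν) :
    f ∘ w ∈ suppWords ν := by
  obtain ⟨t, g, hg, rfl⟩ := hw
  refine ⟨t + 1, update g (t + 1) f, fun s hs => ?_, ?_⟩
  · rcases eq_or_ne s (t + 1) with rfl | hne
    · simpa
    · rw [update_of_ne hne]
      exact hg s (by simp only [Finset.mem_Icc] at hs ⊢; omega)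
  · rw [fwd, update_self,
      fwd_congr fun s hs => update_of_ne (by simp only [Finset.mem_Icc] at hs; omega) _ _]

theorem supp_subset_suppWords : supp ν ⊆ suppWords ν :=
  fun _ hf => comp_mem_suppWords hf ⟨0, fun _ => id, by simp, rfl⟩

variable [Finite S]

theorem ae_mem_supp (hiid : IsIID ν μbar) : ∀ᵐ F ∂μbar, ∀ s, F s ∈ supp ν := by
  refine ae_all_iff.mpr fun s => ae_iff.mpr ?_
  have hunion : {F : ℕ → S → S | F s ∉ supp ν} = ⋃ h ∈ (supp ν)ᶜ, {F | F s = h} := by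
    ext F
    simp
  rw [hunion, measure_biUnion_null_iff (to_countable _)]
  intro h hh
  have hcyl := hiid {s} fun _ => h
  simp only [Finset.mem_singleton, forall_eq, Finset.prod_singleton] at hcyl
  simpa [hcyl, supp] using hh

theorem exists_extension_of_ae (hiid : IsIID ν μbar) {p : (ℕ → S → S) → Prop}
    (hp : ∀ᵐ F ∂μbar, p F) {I : Finset ℕ} {g : ℕ → S → S} (hg : ∀ s ∈ I, g s ∈ supp ν) :
    ∃ F, (∀ s ∈ I, F s = g s) ∧ (∀ s, F s ∈ supp ν) ∧ p F :=
  Measure.exists_mem_of_measure_ne_zero_of_ae (measure_cylinder_pos hiid hg).ne'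
    (ae_restrict_of_ae ((ae_mem_supp hiid).and hp))

theorem le_ncard_range_of_mem_suppWords (hiid : IsIID ν μbar) {m : ℕ}
    (hk : ∀ᵐ F ∂μbar, kF F = m) {w : S → S} (hw : w ∈ suppWords ν) : m ≤ (range w).ncard := by
  obtain ⟨t, g, hg, rfl⟩ := hw
  obtain ⟨F, hFg, -, rfl⟩ := exists_extension_of_ae hiid hk hg
  rw [← fwd_congr hFg]
  exact kF_le_ktF F t

theorem exists_not_injective_mem_supp (hiid : IsIID ν μbar) {m : ℕ}
    (hk : ∀ᵐ F ∂μbar, kF F = m) (hm : m < Nat.card S) : ∃ f ∈ supp ν, ¬ f.Injective := by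
  obtain ⟨F, -, hF, rfl⟩ :=
    exists_extension_of_ae (I := ∅) (g := fun _ => id) hiid hk (by simp)
  obtain ⟨t, ht⟩ := exists_ktF_eq_kF F
  by_contra! hinj
  have hsurj : (fwd F t).Surjective :=
    Finite.injective_iff_surjective.mp (injective_fwd fun s _ => hinj _ (hF s))
  rw [ktF, hsurj.range_eq, ncard_univ] at ht
  omega

end IID

section Consistency

variable [MeasurableSpace S] {ν : Measure (S → S)}

theorem measureReal_singleton_pos_iff [IsFiniteMeasure ν] {f : S → S} :
    0 < ν.real {f} ↔ f ∈ supp ν := by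
  simp [measureReal_def, supp, ENNReal.toReal_pos_iff, measure_lt_top]

variable [Fintype S] [DecidableEq S]

theorem eq_zero_of_sum_measureReal_mul_eq_zero [IsFiniteMeasure ν] {c : (S → S) → ℝ}
    (hsum : ∑ f, ν.real {f} * c f = 0) (hc : ∀ f ∈ supp ν, 0 ≤ c f) {f : S → S}
    (hf : f ∈ supp ν) : c f = 0 := by
  have hterm : ∀ g ∈ Finset.univ, 0 ≤ ν.real {g} * c g := fun g _ => by
    by_cases hg : g ∈ supp ν
    · exact mul_nonneg measureReal_nonneg (hc g hg)
    · rw [← measureReal_singleton_pos_iff, not_lt] at hg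
      simp [le_antisymm hg measureReal_nonneg]
  have := (Finset.sum_eq_zero_iff_of_nonneg hterm).mp hsum f (Finset.mem_univ f)
  exact (mul_eq_zero.mp this).resolve_left (measureReal_singleton_pos_iff.mpr hf).ne'

variable [DiscreteMeasurableSpace S]

theorem exists_mem_supp_apply_eq {P : S → S → ℝ} (hν : Consistent P ν) {i j : S}
    (hP : 0 < P i j) : ∃ f ∈ supp ν, f i = j := by
  have hne : ∑ f ∈ Finset.univ.filter (· i = j), ν {f} ≠ 0 := by
    rw [sum_measure_singleton, Finset.coe_filter_univ, hν]
    exact (ENNReal.ofReal_pos.mpr hP).ne'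
  obtain ⟨f, hf, hfν⟩ := Finset.exists_ne_zero_of_sum_ne_zero hne
  exact ⟨f, pos_iff_ne_zero.mpr hfν, (Finset.mem_filter.mp hf).2⟩

theorem sum_card_fiber_mul_measureReal [IsFiniteMeasure ν] {P : S → S → ℝ}
    (hP : ∀ i j, 0 ≤ P i j) (hν : Consistent P ν) (j : S) :
    ∑ f, (#{i | f i = j} : ℝ) * ν.real {f} = ∑ i, P i j := by
  have hcol : ∀ i, ∑ f with f i = j, ν.real {f} = P i j := fun i => by
    rw [sum_measureReal_singleton, Finset.coe_filter_univ, measureReal_def, hν,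
      ENNReal.toReal_ofReal (hP i j)]
  simp_rw [← hcol, Finset.sum_filter]
  rw [Finset.sum_comm]
  simp [Finset.sum_ite]

theorem sum_measureReal_mul_card_fiber_sub_one [IsProbabilityMeasure ν]
    (hν : Consistent (fun _ _ => (1 : ℝ) / Fintype.card S) ν) (j : S) :
    ∑ f, ν.real {f} * ((#{i | f i = j} : ℝ) - 1) = 0 := by
  have : Nonempty S := ⟨j⟩
  have hcard : (Fintype.card S : ℝ) ≠ 0 := by exact_mod_cast Fintype.card_ne_zero
  have hfib := sum_card_fiber_mul_measureReal (fun _ _ => by positivity) hν j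
  have htot : ∑ f, ν.real {f} = 1 := by
    rw [sum_measureReal_singleton, Finset.coe_univ, probReal_univ]
  simp only [Finset.sum_const, Finset.card_univ, nsmul_eq_mul, mul_one_div_cancel hcard]
    at hfib
  calc ∑ f, ν.real {f} * ((#{i | f i = j} : ℝ) - 1)
      = ∑ f, (#{i | f i = j} : ℝ) * ν.real {f} - ∑ f, ν.real {f} := by
        rw [← Finset.sum_sub_distrib]
        exact Finset.sum_congr rfl fun f _ => by ring
    _ = 0 := by rw [hfib, htot, sub_self]

end Consistency

section Combinatorics

variable [Fintype S]

theorem exists_range_eq_compl_singleton {f : S → S} (hf : ¬ f.Injective)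
    (h : Fintype.card S - 1 ≤ (range f).ncard) : ∃ m, range f = {m}ᶜ := by
  obtain ⟨m, hm⟩ := not_forall.mp (mt Finite.injective_iff_surjective.mpr hf)
  have hsub : range f ⊆ {m}ᶜ := by
    rintro _ ⟨x, rfl⟩ (hx : f x = m)
    exact hm ⟨x, hx⟩
  refine ⟨m, eq_of_subset_of_ncard_le hsub ?_⟩
  rwa [ncard_compl, ncard_singleton, Nat.card_eq_fintype_card]

theorem eq_or_eq_of_apply_eq_of_range_comp {w g : S → S} {m a b : S} (hw : range w = {m}ᶜ)
    (hgw : Fintype.card S - 1 ≤ (range (g ∘ w)).ncard) (hab : a ≠ b) (hg : g a = g b) :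
    a = m ∨ b = m := by
  by_contra! h
  rw [range_comp, hw] at hgw
  have hcompl : ({m}ᶜ : Set S).ncard = Fintype.card S - 1 := by
    rw [ncard_compl, ncard_singleton, Nat.card_eq_fintype_card]
  have hinj : InjOn g {m}ᶜ :=
    injOn_of_ncard_image_eq (le_antisymm ncard_image_le (hcompl ▸ hgw))
  exact hab (hinj h.1 h.2 hg)

theorem card_fiber_pos_iff [DecidableEq S] {f : S → S} {j : S} :
    0 < #{i | f i = j} ↔ j ∈ range f := by
  simp [Finset.card_pos, Finset.filter_nonempty_iff, mem_range]

theorem card_fiber_le_one [DecidableEq S] {f : S → S} (hf : f.Injective) (j : S) :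
    #{i | f i = j} ≤ 1 :=
  Finset.card_le_one.mpr fun _ ha _ hb =>
    hf ((Finset.mem_filter.mp ha).2.trans (Finset.mem_filter.mp hb).2.symm)

variable [MeasurableSpace S] {ν : Measure (S → S)}

theorem eq_or_eq_of_apply_eq
    (hwords : ∀ w ∈ suppWords ν, Fintype.card S - 1 ≤ (range w).ncard)
    {w g : S → S} {m a b : S} (hw : w ∈ suppWords ν) (hwm : range w = {m}ᶜ)
    (hg : g ∈ supp ν) (hab : a ≠ b) (hgab : g a = g b) : a = m ∨ b = m :=
  eq_or_eq_of_apply_eq_of_range_comp hwm (hwords _ (comp_mem_suppWords hg hw)) hab hgab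

theorem apply_eq_apply_of_range_eq_compl_singleton
    (hwords : ∀ w ∈ suppWords ν, Fintype.card S - 1 ≤ (range w).ncard)
    {w₀ w₁ g : S → S} {m₀ m₁ : S} (hw₀ : w₀ ∈ suppWords ν) (hm₀ : range w₀ = {m₀}ᶜ)
    (hw₁ : w₁ ∈ suppWords ν) (hm₁ : range w₁ = {m₁}ᶜ) (hm : m₀ ≠ m₁) (hg : g ∈ supp ν)
    (hginj : ¬ g.Injective) : g m₀ = g m₁ := by
  obtain ⟨a, b, hgab, hab⟩ := not_injective_iff.mp hginj
  rcases eq_or_eq_of_apply_eq hwords hw₀ hm₀ hg hab hgab with rfl | rfl <;>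
    rcases eq_or_eq_of_apply_eq hwords hw₁ hm₁ hg hab hgab with rfl | rfl
  exacts [absurd rfl hm, hgab, hgab.symm, absurd rfl hm]

/-- A non-injective support map misses a point of every collision pair of `g`, so `m₀` or `m₁`. -/
theorem mem_range_of_apply_eq
    (hwords : ∀ w ∈ suppWords ν, Fintype.card S - 1 ≤ (range w).ncard)
    {f g : S → S} {m₀ m₁ j : S} (hg : g ∈ supp ν) (hm : m₀ ≠ m₁) (hcoll : g m₀ = g m₁)
    (hf : f ∈ supp ν) (hj₀ : j ≠ m₀) (hj₁ : j ≠ m₁) : j ∈ range f := by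
  by_cases hinj : f.Injective
  · exact Finite.injective_iff_surjective.mp hinj j
  obtain ⟨m, hfm⟩ :=
    exists_range_eq_compl_singleton hinj (hwords f (supp_subset_suppWords hf))
  rw [hfm]
  rintro rfl
  rcases eq_or_eq_of_apply_eq hwords (supp_subset_suppWords hf) hfm hg hm hcoll with h | h
  exacts [hj₀ h.symm, hj₁ h.symm]

variable [DecidableEq S] [DiscreteMeasurableSpace S] [IsProbabilityMeasure ν]

theorem card_fiber_eq_one_of_forall_le_one
    (hν : Consistent (fun _ _ => (1 : ℝ) / Fintype.card S) ν) {j : S}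
    (hle : ∀ f ∈ supp ν, #{i | f i = j} ≤ 1) {f : S → S} (hf : f ∈ supp ν) :
    #{i | f i = j} = 1 := by
  have hsum : ∑ f, ν.real {f} * (1 - (#{i | f i = j} : ℝ)) = 0 := by
    rw [← neg_eq_zero, ← Finset.sum_neg_distrib, ← sum_measureReal_mul_card_fiber_sub_one hν j]
    exact Finset.sum_congr rfl fun f _ => by ring
  have := eq_zero_of_sum_measureReal_mul_eq_zero hsum
    (fun f hf => sub_nonneg.mpr (by exact_mod_cast hle f hf)) hf
  exact_mod_cast (sub_eq_zero.mp this).symm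

theorem card_fiber_eq_one_of_forall_one_le
    (hν : Consistent (fun _ _ => (1 : ℝ) / Fintype.card S) ν) {j : S}
    (hle : ∀ f ∈ supp ν, 1 ≤ #{i | f i = j}) {f : S → S} (hf : f ∈ supp ν) :
    #{i | f i = j} = 1 := by
  have := eq_zero_of_sum_measureReal_mul_eq_zero (sum_measureReal_mul_card_fiber_sub_one hν j)
    (fun f hf => sub_nonneg.mpr (by exact_mod_cast hle f hf)) hf
  exact_mod_cast sub_eq_zero.mp this

theorem exists_not_injective_mem_range_of_range_eq_compl_singleton
    (hν : Consistent (fun _ _ => (1 : ℝ) / Fintype.card S) ν) {f₀ : S → S} {m₀ : S}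
    (hf₀ : f₀ ∈ supp ν) (hm₀ : range f₀ = {m₀}ᶜ) :
    ∃ g ∈ supp ν, ¬ g.Injective ∧ m₀ ∈ range g := by
  by_contra! hmiss
  have hle : ∀ f ∈ supp ν, #{i | f i = m₀} ≤ 1 := by
    intro f hf
    by_cases hinj : f.Injective
    · exact card_fiber_le_one hinj m₀
    · have := mt card_fiber_pos_iff.mp (hmiss f hf hinj)
      omega
  have hhit : m₀ ∈ range f₀ := by
    rw [← card_fiber_pos_iff, card_fiber_eq_one_of_forall_le_one hν hle hf₀]
    exact one_pos
  rw [hm₀] at hhit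
  exact hhit rfl

theorem false_of_range_eq_compl_singleton_of_ne
    (hwords : ∀ w ∈ suppWords ν, Fintype.card S - 1 ≤ (range w).ncard)
    (hν : Consistent (fun _ _ => (1 : ℝ) / Fintype.card S) ν) (hS : 3 ≤ Fintype.card S)
    {f₀ g : S → S} {m₀ m₁ : S} (hf₀ : f₀ ∈ supp ν) (hm₀ : range f₀ = {m₀}ᶜ)
    (hg : g ∈ supp ν) (hm₁ : range g = {m₁}ᶜ) (hm : m₀ ≠ m₁) (hginj : ¬ g.Injective) :
    False := by
  have hcoll {h : S → S} (hh : h ∈ supp ν) (hhinj : ¬ h.Injective) : h m₀ = h m₁ :=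
    apply_eq_apply_of_range_eq_compl_singleton hwords (supp_subset_suppWords hf₀) hm₀
      (supp_subset_suppWords hg) hm₁ hm hh hhinj
  obtain ⟨j, hj⟩ : ({m₀, m₁}ᶜ : Finset S).Nonempty := by
    rw [← Finset.card_pos, Finset.card_compl]
    have := Finset.card_le_two (a := m₀) (b := m₁)
    omega
  simp only [Finset.mem_compl, Finset.mem_insert, Finset.mem_singleton, not_or] at hj
  obtain ⟨h, hh, hhm₀⟩ := exists_mem_supp_apply_eq hν (i := m₀) (j := j) (by positivity)
  have hhinj : ¬ h.Injective := fun hinj => by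
    have hrange : range (h ∘ f₀) = {j}ᶜ := by
      rw [range_comp, hm₀, image_compl_eq hinj.bijective_of_finite, image_singleton, hhm₀]
    rcases eq_or_eq_of_apply_eq hwords (comp_mem_suppWords hh (supp_subset_suppWords hf₀))
      hrange hg hm (hcoll hg hginj) with h | h
    exacts [hj.1 h.symm, hj.2 h.symm]
  have hhm₁ : h m₁ = j := (hcoll hh hhinj).symm.trans hhm₀
  have hfib : #{i | h i = j} = 1 := card_fiber_eq_one_of_forall_one_le hν (fun f hf =>
    card_fiber_pos_iff.mpr (mem_range_of_apply_eq hwords hg hm (hcoll hg hginj) hf hj.1 hj.2)) hh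
  have htwo : 2 ≤ #{i | h i = j} := by
    calc 2 = #{m₀, m₁} := (Finset.card_pair hm).symm
      _ ≤ #{i | h i = j} := Finset.card_le_card fun x hx => by
        rcases Finset.mem_insert.mp hx with rfl | hx
        · simpa using hhm₀
        · simpa [Finset.mem_singleton.mp hx] using hhm₁
  omega

theorem false_of_not_injective_mem_supp
    (hwords : ∀ w ∈ suppWords ν, Fintype.card S - 1 ≤ (range w).ncard)
    (hν : Consistent (fun _ _ => (1 : ℝ) / Fintype.card S) ν) (hS : 3 ≤ Fintype.card S)
    {f₀ : S → S} (hf₀ : f₀ ∈ supp ν) (hf₀inj : ¬ f₀.Injective) : False := by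
  obtain ⟨m₀, hm₀⟩ :=
    exists_range_eq_compl_singleton hf₀inj (hwords f₀ (supp_subset_suppWords hf₀))
  obtain ⟨g, hg, hginj, hm₀g⟩ :=
    exists_not_injective_mem_range_of_range_eq_compl_singleton hν hf₀ hm₀
  obtain ⟨m₁, hm₁⟩ := exists_range_eq_compl_singleton hginj (hwords g (supp_subset_suppWords hg))
  have hm : m₀ ≠ m₁ := by
    rintro rfl
    exact (hm₁ ▸ hm₀g) rfl
  exact false_of_range_eq_compl_singleton_of_ne hwords hν hS hf₀ hm₀ hg hm₁ hm hginj

end Combinatorics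

theorem stmt19 [Fintype S] [DecidableEq S]
    [MeasurableSpace S] [DiscreteMeasurableSpace S]
    (n : ℕ) (hcard : Fintype.card S = n) (hn : 3 ≤ n) :
    ¬ ∃ ν : Measure (S → S), IsProbabilityMeasure ν ∧
        Consistent (fun _ _ => (1 : ℝ) / n) ν ∧
        ∃ μbar : Measure (ℕ → S → S), IsProbabilityMeasure μbar ∧ IsIID ν μbar ∧
          μbar {F | kF F = n - 1} = 1 := by
  rintro ⟨ν, hν, hcons, μbar, hμbar, hiid, hk⟩
  subst hcard
  have hae : ∀ᵐ F ∂μbar, kF F = Fintype.card S - 1 :=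
    (ae_iff_measure_eq (measurable_kF (measurableSet_singleton _)).nullMeasurableSet).mpr
      (hk.trans measure_univ.symm)
  obtain ⟨f₀, hf₀, hf₀inj⟩ :=
    exists_not_injective_mem_supp hiid hae (by rw [Nat.card_eq_fintype_card]; omega)
  exact false_of_not_injective_mem_supp
    (fun _ hw => le_ncard_range_of_mem_suppWords hiid hae hw) hcons hn hf₀ hf₀inj

end CFTP
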